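/- arXiv:1601.03724 — 5 statements merged into one kernel-verified Lean document; each statement's English description precedes it below -/
import Mathlib

section
/- (Andréief's identity) Let (X, μ) be a σ-finite measure space, let n ≥ 1, and let f_1,…,f_n and g_1,…,g_n : X → ℂ be measurable functions such that f_j · g_k is μ-integrable for all j, k = 1,…,n. Then the function (x_1,…,x_n) ↦ det[f_j(x_k)]_{j,k=1..n} · det[g_j(x_k)]_{j,k=1..n} is integrable with respect to the n-fold product measure μ^{⊗n}, and ∫_{X^n} det[f_j(x_k)]_{j,k=1..n} det[g_j(x_k)]_{j,k=1..n} dμ^{⊗n}(x) = n! · det[ ∫_X f_j(x) g_k(x) dμ(x) ]_{j,k=1..n}. -/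
open MeasureTheory Filter Set

noncomputable section

/-- Lebesgue measure on n×n complex matrices: product of Lebesgue measures of all
(real and imaginary parts of the) entries. -/
instance matrixMeasureSpace (n : ℕ) : MeasureSpace (Matrix (Fin n) (Fin n) ℂ) :=
  inferInstanceAs (MeasureSpace (Fin n → Fin n → ℂ))

/-- Vandermonde product `Δ_n(a) = ∏_{j<k} (a k - a j)`. -/
def vdm {R : Type*} [CommRing R] {n : ℕ} (a : Fin n → R) : R :=
  ∏ j : Fin n, ∏ k ∈ Finset.Ioi j, (a k - a j)

/-- Squared singular values of `g`, i.e. the eigenvalues of `gᴴ * g`. -/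
def sqSV {n : ℕ} (g : Matrix (Fin n) (Fin n) ℂ) : Fin n → ℝ :=
  (Matrix.isHermitian_conjTranspose_mul_self g).eigenvalues

/-- `f(ugv) = f(g)` for all unitary `u, v`. -/
def BiUnitarilyInvariant {n : ℕ} (f : Matrix (Fin n) (Fin n) ℂ → ℝ) : Prop :=
  ∀ u ∈ Matrix.unitaryGroup (Fin n) ℂ, ∀ v ∈ Matrix.unitaryGroup (Fin n) ℂ,
    ∀ g : Matrix (Fin n) (Fin n) ℂ, f (u * g * v) = f g

/-- `f` has `ρ` as joint density of its squared singular values: for every bounded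
measurable symmetric test function `φ` one has `∫ φ(λ(gᴴg)) f(g) dg = ∫_{(0,∞)^n} φ ρ`. -/
def HasSqSVDensity {n : ℕ} (f : Matrix (Fin n) (Fin n) ℂ → ℝ)
    (ρ : (Fin n → ℝ) → ℝ) : Prop :=
  ∀ φ : (Fin n → ℝ) → ℝ, Measurable φ → (∃ M, ∀ x, |φ x| ≤ M) →
    (∀ σ : Equiv.Perm (Fin n), ∀ x, φ (x ∘ σ) = φ x) →
    ∫ g : Matrix (Fin n) (Fin n) ℂ, φ (sqSV g) * f g
      = ∫ a in {a : Fin n → ℝ | ∀ i, 0 < a i}, φ a * ρ a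

/-- The Euler operator `ω ↦ (a ↦ -a * ω'(a))`. -/
def eulerOp (f : ℝ → ℝ) : ℝ → ℝ := fun a => -a * deriv f a

/-- Multiplicative convolution on `(0,∞)`, real-valued:
`(f ⊛ g)(x) = ∫_0^∞ f(x/y) g(y) dy/y`. -/
def mconvR (f g : ℝ → ℝ) (x : ℝ) : ℝ := ∫ y in Set.Ioi (0:ℝ), f (x / y) * g y / y

/-- Multiplicative convolution on `(0,∞)`, complex-valued. -/
def mconvC (f g : ℝ → ℂ) (x : ℝ) : ℂ := ∫ y in Set.Ioi (0:ℝ), f (x / y) * g y / (y : ℂ)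

/-- Multiplicative convolution of matrix densities:
`(f₁ ⊛ f₂)(g) = ∫_{det y ≠ 0} f₁(g y⁻¹) f₂(y) |det y|^{-2n} dy`. -/
def matConv {n : ℕ} (f₁ f₂ : Matrix (Fin n) (Fin n) ℂ → ℝ)
    (g : Matrix (Fin n) (Fin n) ℂ) : ℝ :=
  ∫ y in {y : Matrix (Fin n) (Fin n) ℂ | y.det ≠ 0},
    f₁ (g * y⁻¹) * f₂ y / ‖y.det‖ ^ (2 * n)

/-- Complex power `x^w := exp(w ln x)` of a positive real. -/
def cpowP (x : ℝ) (w : ℂ) : ℂ := Complex.exp (w * Real.log x)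

/-- The vector `ρ' = ((2j+n-1)/2)_{j=1..n}`. -/
def rhoV (n : ℕ) : Fin n → ℂ := fun j => (2 * ((j : ℕ) + 1) + (n : ℂ) - 1) / 2

/-- The spherical function of `GL(n, ℂ)`:
`φ_s(g) = (Δ(ρ')/Δ(s)) det[λ_j(gᴴg)^{s_k+(n-1)/2}] / Δ(λ(gᴴg))`. -/
def sphericalFn {n : ℕ} (s : Fin n → ℂ) (g : Matrix (Fin n) (Fin n) ℂ) : ℂ :=
  vdm (rhoV n) / vdm s *
    Matrix.det (Matrix.of fun j k : Fin n => cpowP (sqSV g j) (s k + ((n : ℂ) - 1) / 2)) /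
    vdm (fun j : Fin n => (sqSV g j : ℂ))

/-- Mellin transform `Mw(s) = ∫_0^∞ w(x) x^{s-1} dx` of a real function on `(0,∞)`. -/
def mellinR (w : ℝ → ℝ) (s : ℂ) : ℂ :=
  ∫ x in Set.Ioi (0:ℝ), (w x : ℂ) * cpowP x (s - 1)

/-- Mellin transform of a complex function on `(0,∞)`. -/
def mellinCC (w : ℝ → ℂ) (s : ℂ) : ℂ :=
  ∫ x in Set.Ioi (0:ℝ), w x * cpowP x (s - 1)

/-!
Expanding both determinants by the Leibniz formula writes the integrand as a signed sum, over
pairs of permutations `σ, τ`, of products `∏ₖ f_{σ k}(x_k) g_{τ k}(x_k)` of functions of separate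
variables; by Fubini each integrates to `∏ₖ ∫ f_{σ k} g_{τ k}`. For fixed `σ` the sum over `τ` is
`sign σ · det[∫ f_j g_k]`, so each of the `n!` permutations `σ` contributes `det[∫ f_j g_k]`.
-/

open Equiv

namespace Matrix

variable {ι R : Type*} [Fintype ι] [DecidableEq ι] [CommRing R]

theorem det_mul_det_eq_sum_sum_sign_smul_prod (A B : Matrix ι ι R) :
    A.det * B.det =
      ∑ σ : Perm ι, ∑ τ : Perm ι, Perm.sign σ • Perm.sign τ • ∏ k, A (σ k) k * B (τ k) k := by
  simp only [det_apply, Finset.sum_mul_sum, smul_mul_smul_comm, mul_smul, Finset.prod_mul_distrib]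

theorem sum_sign_smul_prod_apply_perm (σ : Perm ι) (M : Matrix ι ι R) :
    ∑ τ : Perm ι, Perm.sign τ • ∏ k, M (σ k) (τ k) = Perm.sign σ • M.det := by
  rw [Units.smul_def, zsmul_eq_mul, ← det_permute, ← det_transpose, det_apply]
  rfl

theorem sum_sum_sign_smul_prod_eq_factorial_smul_det (M : Matrix ι ι R) :
    ∑ σ : Perm ι, ∑ τ : Perm ι, Perm.sign σ • Perm.sign τ • ∏ k, M (σ k) (τ k) =
      (Fintype.card ι).factorial • M.det := calc
  _ = ∑ _σ : Perm ι, M.det := Finset.sum_congr rfl fun σ _ => by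
    rw [← Finset.smul_sum, sum_sign_smul_prod_apply_perm, smul_smul, Int.units_mul_self, one_smul]
  _ = _ := by rw [Finset.sum_const, Finset.card_univ, Fintype.card_perm]

end Matrix

section UnitsIntSMul

variable {X E : Type*} [MeasurableSpace X] {μ : Measure X} [NormedAddCommGroup E] {F : X → E}

theorem MeasureTheory.Integrable.units_int_smul (u : ℤˣ) (hF : Integrable F μ) :
    Integrable (fun x => u • F x) μ := by
  rcases Int.units_eq_one_or u with rfl | rfl
  · simpa using hF
  · simpa using hF.neg

theorem MeasureTheory.integral_units_int_smul [NormedSpace ℝ E] (u : ℤˣ) :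
    ∫ x, u • F x ∂μ = u • ∫ x, F x ∂μ := by
  rcases Int.units_eq_one_or u with rfl | rfl
  · simp
  · simp [integral_neg]

end UnitsIntSMul

section Andreief

variable {ι X 𝕜 : Type*} [Fintype ι] [DecidableEq ι] [MeasurableSpace X] {μ : Measure X}
  [SigmaFinite μ] [RCLike 𝕜] {f g : ι → X → 𝕜}

theorem integrable_sign_smul_prod (hint : ∀ j k, Integrable (fun x => f j x * g k x) μ)
    (σ τ : Perm ι) :
    Integrable (fun x : ι → X => Perm.sign σ • Perm.sign τ • ∏ k, f (σ k) (x k) * g (τ k) (x k))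
      (Measure.pi fun _ => μ) :=
  ((Integrable.fintype_prod fun k => hint (σ k) (τ k)).units_int_smul _).units_int_smul _

theorem integrable_det_mul_det (hint : ∀ j k, Integrable (fun x => f j x * g k x) μ) :
    Integrable (fun x : ι → X =>
        (Matrix.of fun j k => f j (x k)).det * (Matrix.of fun j k => g j (x k)).det)
      (Measure.pi fun _ => μ) := by
  simp only [Matrix.det_mul_det_eq_sum_sum_sign_smul_prod, Matrix.of_apply]
  exact integrable_finsetSum _ fun σ _ => integrable_finsetSum _ fun τ _ =>
    integrable_sign_smul_prod hint σ τ

theorem integral_det_mul_det (hint : ∀ j k, Integrable (fun x => f j x * g k x) μ) :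
    ∫ x : ι → X, (Matrix.of fun j k => f j (x k)).det * (Matrix.of fun j k => g j (x k)).det
        ∂(Measure.pi fun _ => μ) =
      (Fintype.card ι).factorial • (Matrix.of fun j k => ∫ x, f j x * g k x ∂μ).det := by
  simp only [Matrix.det_mul_det_eq_sum_sum_sign_smul_prod, Matrix.of_apply]
  rw [← Matrix.sum_sum_sign_smul_prod_eq_factorial_smul_det, integral_finsetSum _ fun σ _ => integrable_finsetSum _ fun τ _ =>
    integrable_sign_smul_prod hint σ τ]
  refine Finset.sum_congr rfl fun σ _ => ?_
  rw [integral_finsetSum _ fun τ _ => integrable_sign_smul_prod hint σ τ]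
  refine Finset.sum_congr rfl fun τ _ => ?_
  rw [integral_units_int_smul, integral_units_int_smul,
    integral_fintype_prod_eq_prod (f := fun k x => f (σ k) x * g (τ k) x)]
  rfl

end Andreief

theorem andreief_identity_general {X : Type*} [MeasurableSpace X] (μ : Measure X) [SigmaFinite μ]
    (n : ℕ) (f g : Fin n → X → ℂ)
    (hint : ∀ j k, Integrable (fun x => f j x * g k x) μ) :
    Integrable (fun x : Fin n → X =>
        Matrix.det (Matrix.of fun j k : Fin n => f j (x k)) *
        Matrix.det (Matrix.of fun j k : Fin n => g j (x k)))
      (Measure.pi fun _ => μ) ∧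
    (∫ x : Fin n → X,
        Matrix.det (Matrix.of fun j k : Fin n => f j (x k)) *
        Matrix.det (Matrix.of fun j k : Fin n => g j (x k)) ∂(Measure.pi fun _ => μ))
      = (Nat.factorial n : ℂ) *
          Matrix.det (Matrix.of fun j k : Fin n => ∫ x, f j x * g k x ∂μ) := by
  refine ⟨integrable_det_mul_det hint, ?_⟩
  rw [integral_det_mul_det hint, Fintype.card_fin, nsmul_eq_mul]

/-- Andréief's identity. -/
theorem andreief_identity {X : Type*} [MeasurableSpace X] (μ : Measure X) [SigmaFinite μ]
    (n : ℕ) (hn : 1 ≤ n) (f g : Fin n → X → ℂ)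
    (hf : ∀ j, Measurable (f j)) (hg : ∀ j, Measurable (g j))
    (hint : ∀ j k, Integrable (fun x => f j x * g k x) μ) :
    Integrable (fun x : Fin n → X =>
        Matrix.det (Matrix.of fun j k : Fin n => f j (x k)) *
        Matrix.det (Matrix.of fun j k : Fin n => g j (x k)))
      (Measure.pi fun _ => μ) ∧
    (∫ x : Fin n → X,
        Matrix.det (Matrix.of fun j k : Fin n => f j (x k)) *
        Matrix.det (Matrix.of fun j k : Fin n => g j (x k)) ∂(Measure.pi fun _ => μ))
      = (Nat.factorial n : ℂ) *
          Matrix.det (Matrix.of fun j k : Fin n => ∫ x, f j x * g k x ∂μ) :=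
  andreief_identity_general μ n f g hint

end
end

section
/- (Stirling bound on vertical strips) Let a ≤ b be real numbers. Then there exist constants C > 0 and T > 0 such that for every real c with a ≤ c ≤ b and every real t with |t| ≥ T, the complex Gamma function satisfies |Γ(c + it)| ≤ C · |t|^{c − 1/2} · e^{−π |t| / 2}. -/
open MeasureTheory Filter Set

noncomputable section

/-!
Euler's limit formula gives `‖Γ(c + it)‖ = Γ(c) ∏_{j ≥ 0} (1 + t²/(c + j)²)^(-1/2)` for `c > 0`.
Since `u ↦ log (1 + t²/u²)` is convex, the trapezoid rule bounds `∑_{j ≥ 0} log (1 + t²/(c + j)²)`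
from below by `∫_c^∞ log (1 + t²/u²) du + ½ log (1 + t²/c²)`, and the integral equals
`π t - c log (1 + t²/c²) - 2 t arctan (c/t)`. For `c ≥ 1` and `t ≥ 1` this gives
`‖Γ(c + it)‖ ≤ C t^(c - 1/2) e^(-π t/2)` with `C` uniform for bounded `c`. Smaller real parts are
reached through `Γ(s + m) = s (s + 1) ⋯ (s + m - 1) Γ(s)`, each factor having modulus at least `|t|`,
and negative `t` through `Γ(s̄) = conj Γ(s)`.
-/

open scoped Topology

lemma Real.arctan_le_self {x : ℝ} (hx : 0 ≤ x) : Real.arctan x ≤ x :=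
  (Real.le_tan (Real.arctan_nonneg.2 hx) (Real.arctan_lt_pi_div_two x)).trans_eq
    (Real.tan_arctan x)

theorem ConvexOn.intervalIntegral_le_trapezoid {f : ℝ → ℝ} {p q : ℝ} (hpq : p ≤ q)
    (hf : ConvexOn ℝ (Icc p q) f) (hfi : IntervalIntegrable f volume p q) :
    ∫ x in p..q, f x ≤ (q - p) * (f p + f q) / 2 := by
  rcases hpq.eq_or_lt with rfl | hpq
  · simp
  have hqp : 0 < q - p := sub_pos.2 hpq
  have hchord : ∀ x ∈ Icc p q, f x ≤ f p + (x - p) * ((f q - f p) / (q - p)) := by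
    intro x hx
    have h := hf.2 (left_mem_Icc.2 hpq.le) (right_mem_Icc.2 hpq.le)
      (div_nonneg (sub_nonneg.2 hx.2) hqp.le) (div_nonneg (sub_nonneg.2 hx.1) hqp.le)
      (by field_simp; ring)
    have hx' : (q - x) / (q - p) * p + (x - p) / (q - p) * q = x := by field_simp; ring
    simp only [smul_eq_mul, hx'] at h
    refine h.trans_eq ?_
    field_simp
    ring
  calc ∫ x in p..q, f x ≤ ∫ x in p..q, (f p + (x - p) * ((f q - f p) / (q - p))) :=
        intervalIntegral.integral_mono_on hpq.le hfi
          (by apply Continuous.intervalIntegrable; fun_prop) hchord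
    _ = (q - p) * f p + (q - p) ^ 2 / 2 * ((f q - f p) / (q - p)) := by
        rw [intervalIntegral.integral_add (by simp)
          (by apply Continuous.intervalIntegrable; fun_prop)]
        simp only [intervalIntegral.integral_const, intervalIntegral.integral_mul_const,
          intervalIntegral.integral_comp_sub_right (fun x => x), integral_id, smul_eq_mul]
        ring
    _ = (q - p) * (f p + f q) / 2 := by
        field_simp
        ring

theorem ConvexOn.intervalIntegral_add_half_le_sum_range {f : ℝ → ℝ} {c : ℝ}
    (hf : ConvexOn ℝ (Ici c) f) (hfc : ContinuousOn f (Ici c)) (n : ℕ) :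
    (∫ x in c..c + n, f x) + (f c + f (c + n)) / 2 ≤ ∑ j ∈ Finset.range (n + 1), f (c + j) := by
  have hint : ∀ {p q : ℝ}, c ≤ p → c ≤ q → IntervalIntegrable f volume p q :=
    fun hp hq => (hfc.mono fun _ hx => le_trans (le_min hp hq) hx.1).intervalIntegrable
  induction n with
  | zero => simp
  | succ n ih =>
    have hn : c ≤ c + n := le_add_of_nonneg_right n.cast_nonneg
    have hn1 : c + n ≤ c + (n + 1) := by linarith
    have htrap := (hf.subset (fun x hx => hn.trans hx.1) (convex_Icc _ _))
      |>.intervalIntegral_le_trapezoid hn1 (hint hn (hn.trans hn1))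
    have hsplit := intervalIntegral.integral_add_adjacent_intervals (hint le_rfl hn)
      (hint hn (hn.trans hn1))
    rw [show c + (n + 1 : ℝ) - (c + n) = 1 by ring, one_mul] at htrap
    rw [Finset.sum_range_succ]
    push_cast
    linarith

def logOneAddSqDiv (t u : ℝ) : ℝ := Real.log (1 + t ^ 2 / u ^ 2)

def logOneAddSqDivAntideriv (t u : ℝ) : ℝ :=
  u * logOneAddSqDiv t u + 2 * t * Real.arctan (u / t)

lemma logOneAddSqDiv_nonneg (t u : ℝ) : 0 ≤ logOneAddSqDiv t u :=
  Real.log_nonneg (le_add_of_nonneg_right (by positivity))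

lemma logOneAddSqDiv_le (t u : ℝ) : logOneAddSqDiv t u ≤ t ^ 2 / u ^ 2 := by
  have := Real.log_le_sub_one_of_pos (by positivity : (0 : ℝ) < 1 + t ^ 2 / u ^ 2)
  rw [logOneAddSqDiv]
  linarith

lemma hasDerivAt_logOneAddSqDiv (t : ℝ) {u : ℝ} (hu : u ≠ 0) :
    HasDerivAt (logOneAddSqDiv t) (-2 * t ^ 2 / (u * (u ^ 2 + t ^ 2))) u := by
  have h : HasDerivAt (fun v => 1 + t ^ 2 / v ^ 2)
      ((0 * u ^ 2 - t ^ 2 * (2 * u ^ (2 - 1))) / (u ^ 2) ^ 2) u :=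
    ((hasDerivAt_const u (t ^ 2)).div (hasDerivAt_pow 2 u) (pow_ne_zero 2 hu)).const_add 1
  refine (h.log (by positivity)).congr_deriv ?_
  have : u ^ 2 + t ^ 2 ≠ 0 := by positivity
  field_simp
  ring

lemma continuousOn_logOneAddSqDiv (t : ℝ) : ContinuousOn (logOneAddSqDiv t) (Ioi 0) :=
  fun _ hu => (hasDerivAt_logOneAddSqDiv t (ne_of_gt hu)).continuousAt.continuousWithinAt

lemma convexOn_logOneAddSqDiv (t : ℝ) : ConvexOn ℝ (Ioi 0) (logOneAddSqDiv t) := by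
  refine MonotoneOn.convexOn_of_deriv (convex_Ioi 0) (continuousOn_logOneAddSqDiv t)
    (fun u hu => (hasDerivAt_logOneAddSqDiv t (ne_of_gt (interior_subset hu)))
      |>.differentiableAt.differentiableWithinAt) ?_
  rw [interior_Ioi]
  intro u (hu : 0 < u) v (hv : 0 < v) huv
  rw [(hasDerivAt_logOneAddSqDiv t hu.ne').deriv, (hasDerivAt_logOneAddSqDiv t hv.ne').deriv,
    div_le_div_iff₀ (by positivity) (by positivity)]
  nlinarith [mul_le_mul_of_nonneg_left (pow_le_pow_left₀ hu.le huv 3) (sq_nonneg t),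
    mul_le_mul_of_nonneg_left huv (pow_nonneg (sq_nonneg t) 2)]

lemma hasDerivAt_logOneAddSqDivAntideriv {t u : ℝ} (ht : t ≠ 0) (hu : u ≠ 0) :
    HasDerivAt (logOneAddSqDivAntideriv t) (logOneAddSqDiv t u) u := by
  have h : HasDerivAt (fun v => v * logOneAddSqDiv t v + 2 * t * Real.arctan (v / t))
      (1 * logOneAddSqDiv t u + u * (-2 * t ^ 2 / (u * (u ^ 2 + t ^ 2))) +
        2 * t * (1 / (1 + (u / t) ^ 2) * (1 / t))) u :=
    ((hasDerivAt_id u).mul (hasDerivAt_logOneAddSqDiv t hu)).add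
      (((hasDerivAt_id u).div_const t).arctan.const_mul (2 * t))
  refine h.congr_deriv ?_
  have : u ^ 2 + t ^ 2 ≠ 0 := by positivity
  field_simp
  ring

lemma tendsto_logOneAddSqDivAntideriv_atTop {t : ℝ} (ht : 0 < t) :
    Tendsto (logOneAddSqDivAntideriv t) atTop (𝓝 (Real.pi * t)) := by
  have hfirst : Tendsto (fun u => u * logOneAddSqDiv t u) atTop (𝓝 0) := by
    refine squeeze_zero' ?_ ?_ (tendsto_const_nhds.div_atTop tendsto_id :
      Tendsto (fun u : ℝ => t ^ 2 / u) atTop (𝓝 0))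
    · filter_upwards [eventually_gt_atTop 0] with u hu
      exact mul_nonneg hu.le (logOneAddSqDiv_nonneg t u)
    · filter_upwards [eventually_gt_atTop 0] with u hu
      calc u * logOneAddSqDiv t u ≤ u * (t ^ 2 / u ^ 2) :=
            mul_le_mul_of_nonneg_left (logOneAddSqDiv_le t u) hu.le
        _ = t ^ 2 / u := by field_simp
  have harctan : Tendsto (fun u => 2 * t * Real.arctan (u / t)) atTop
      (𝓝 (2 * t * (Real.pi / 2))) :=
    ((Real.tendsto_arctan_atTop.mono_right nhdsWithin_le_nhds).comp
      (tendsto_id.atTop_div_const ht)).const_mul (2 * t)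
  rw [show Real.pi * t = 0 + 2 * t * (Real.pi / 2) by ring]
  exact hfirst.add harctan

lemma logOneAddSqDivAntideriv_sub_le_sum {t c : ℝ} (ht : t ≠ 0) (hc : 0 < c) (n : ℕ) :
    logOneAddSqDivAntideriv t (c + n) - logOneAddSqDivAntideriv t c + logOneAddSqDiv t c / 2
      ≤ ∑ j ∈ Finset.range (n + 1), logOneAddSqDiv t (c + j) := by
  have hpos : Ici c ⊆ Ioi 0 := fun x hx => hc.trans_le hx
  have hsum := ((convexOn_logOneAddSqDiv t).subset hpos (convex_Ici c))
    |>.intervalIntegral_add_half_le_sum_range ((continuousOn_logOneAddSqDiv t).mono hpos) n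
  have hcn : uIcc c (c + n) ⊆ Ioi 0 := by
    rw [uIcc_of_le (le_add_of_nonneg_right n.cast_nonneg)]
    exact fun x hx => hc.trans_le hx.1
  have hint : ∫ x in c..c + n, logOneAddSqDiv t x
      = logOneAddSqDivAntideriv t (c + n) - logOneAddSqDivAntideriv t c :=
    intervalIntegral.integral_eq_sub_of_hasDerivAt
      (fun x hx => hasDerivAt_logOneAddSqDivAntideriv ht (hcn hx).ne')
      ((continuousOn_logOneAddSqDiv t).mono hcn).intervalIntegrable
  linarith [logOneAddSqDiv_nonneg t (c + n)]

lemma norm_ofReal_add_mul_I_eq_mul_exp {u : ℝ} (hu : 0 < u) (t : ℝ) :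
    ‖(u + t * Complex.I : ℂ)‖ = u * Real.exp (logOneAddSqDiv t u / 2) := by
  refine (pow_left_inj₀ (norm_nonneg _) (by positivity) two_ne_zero).1 ?_
  rw [Complex.sq_norm, Complex.normSq_add_mul_I, mul_pow, ← Real.exp_nat_mul, logOneAddSqDiv]
  push_cast
  rw [mul_div_cancel₀ _ two_ne_zero, Real.exp_log (by positivity)]
  field_simp

lemma norm_GammaSeq_ofReal_add_mul_I {c : ℝ} (hc : 0 < c) (t : ℝ) {n : ℕ} (hn : n ≠ 0) :
    ‖Complex.GammaSeq (c + t * Complex.I) n‖ = Real.GammaSeq c n *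
      Real.exp (-(∑ j ∈ Finset.range (n + 1), logOneAddSqDiv t (c + j)) / 2) := by
  have hfactor : ∀ j : ℕ,
      ‖(c + t * Complex.I : ℂ) + j‖ = (c + j) * Real.exp (logOneAddSqDiv t (c + j) / 2) := by
    intro j
    rw [← norm_ofReal_add_mul_I_eq_mul_exp (by positivity)]
    push_cast
    ring_nf
  rw [Complex.GammaSeq, Real.GammaSeq, norm_div, norm_mul, norm_prod,
    Complex.norm_natCast_cpow_of_pos (Nat.pos_of_ne_zero hn), Complex.norm_natCast]
  simp only [hfactor, Finset.prod_mul_distrib, ← Real.exp_sum, ← Finset.sum_div, Complex.add_re,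
    Complex.ofReal_re, Complex.mul_re, Complex.I_re, Complex.I_im, Complex.ofReal_im, mul_zero,
    zero_mul, sub_zero, add_zero]
  rw [neg_div, Real.exp_neg]
  field_simp

theorem norm_Gamma_ofReal_add_mul_I_le {c t : ℝ} (hc : 0 < c) (ht : 0 < t) :
    ‖Complex.Gamma (c + t * Complex.I)‖ ≤ Real.Gamma c *
      Real.exp ((logOneAddSqDivAntideriv t c - logOneAddSqDiv t c / 2 - Real.pi * t) / 2) := by
  set B := logOneAddSqDivAntideriv t c - logOneAddSqDiv t c / 2 with hB
  have hseq : ∀ᶠ n : ℕ in atTop, ‖Complex.GammaSeq (c + t * Complex.I) n‖ ≤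
      Real.GammaSeq c n * Real.exp ((B - logOneAddSqDivAntideriv t (c + n)) / 2) := by
    filter_upwards [eventually_ne_atTop 0] with n hn
    rw [norm_GammaSeq_ofReal_add_mul_I hc t hn]
    have hsum := logOneAddSqDivAntideriv_sub_le_sum ht.ne' hc n
    have : 0 ≤ Real.GammaSeq c n := by unfold Real.GammaSeq; positivity
    gcongr
    linarith [hB]
  have hlim : Tendsto (fun n : ℕ => Real.GammaSeq c n *
      Real.exp ((B - logOneAddSqDivAntideriv t (c + n)) / 2)) atTop
      (𝓝 (Real.Gamma c * Real.exp ((B - Real.pi * t) / 2))) :=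
    (Real.GammaSeq_tendsto_Gamma c).mul <| (Real.continuous_exp.tendsto _).comp <|
      (((tendsto_logOneAddSqDivAntideriv_atTop ht).comp
        (tendsto_atTop_add_const_left atTop c tendsto_natCast_atTop_atTop)).const_sub B)
        |>.div_const 2
  exact le_of_tendsto_of_tendsto
    ((continuous_norm.tendsto _).comp (Complex.GammaSeq_tendsto_Gamma _)) hlim hseq

lemma logOneAddSqDivAntideriv_sub_half_le {c t : ℝ} (hc : 1 ≤ c) (ht : 1 ≤ t) :
    logOneAddSqDivAntideriv t c - logOneAddSqDiv t c / 2
      ≤ (2 * c - 1) * Real.log t + c * (Real.log 2 + 2) := by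
  have harctan : 2 * t * Real.arctan (c / t) ≤ 2 * c := by
    calc 2 * t * Real.arctan (c / t) ≤ 2 * t * (c / t) := by
          gcongr; exact Real.arctan_le_self (by positivity)
      _ = 2 * c := by field_simp
  have hlog : logOneAddSqDiv t c ≤ Real.log 2 + 2 * Real.log t := by
    have hsq : Real.log (2 * t ^ 2) = Real.log 2 + 2 * Real.log t := by
      rw [Real.log_mul two_ne_zero (by positivity), Real.log_pow]
      push_cast
      ring
    rw [← hsq]
    refine Real.log_le_log (by positivity) ?_
    have : t ^ 2 / c ^ 2 ≤ t ^ 2 := div_le_self (sq_nonneg t) (one_le_pow₀ hc)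
    nlinarith
  have hlog2 : 0 ≤ Real.log 2 := Real.log_nonneg one_le_two
  rw [logOneAddSqDivAntideriv]
  nlinarith [mul_le_mul_of_nonneg_left hlog (by linarith : (0:ℝ) ≤ c - 1 / 2)]

theorem norm_Gamma_ofReal_add_mul_I_le_rpow {c t : ℝ} (hc : 1 ≤ c) (ht : 1 ≤ t) :
    ‖Complex.Gamma (c + t * Complex.I)‖ ≤ Real.Gamma c * Real.exp (c * (Real.log 2 + 2) / 2) *
      t ^ (c - 1 / 2) * Real.exp (-(Real.pi * t) / 2) := by
  refine (norm_Gamma_ofReal_add_mul_I_le (by linarith) (by linarith)).trans ?_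
  rw [Real.rpow_def_of_pos (by linarith), mul_assoc, mul_assoc, ← Real.exp_add, ← Real.exp_add]
  have := Real.Gamma_pos_of_pos (by linarith : 0 < c)
  gcongr
  linarith [logOneAddSqDivAntideriv_sub_half_le hc ht]

theorem exists_norm_Gamma_le_rpow_of_one_le (L : ℝ) :
    ∃ C > 0, ∀ c : ℝ, 1 ≤ c → c ≤ L → ∀ t : ℝ, 1 ≤ t →
      ‖Complex.Gamma (c + t * Complex.I)‖
        ≤ C * t ^ (c - 1 / 2) * Real.exp (-(Real.pi * t) / 2) := by
  refine ⟨max 1 (Real.Gamma L) * Real.exp (L * (Real.log 2 + 2) / 2), by positivity,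
    fun c hc hcL t ht => (norm_Gamma_ofReal_add_mul_I_le_rpow hc ht).trans ?_⟩
  have hGamma : Real.Gamma c ≤ max 1 (Real.Gamma L) := by
    simpa [Real.Gamma_one] using Real.convexOn_Gamma.le_max_of_mem_Icc (mem_Ioi.2 one_pos)
      (mem_Ioi.2 (by linarith : (0:ℝ) < L)) ⟨hc, hcL⟩
  have := Real.Gamma_pos_of_pos (by linarith : 0 < c)
  have := Real.log_nonneg one_le_two
  gcongr

lemma Complex.abs_im_pow_mul_norm_Gamma_le (s : ℂ) (m : ℕ) :
    |s.im| ^ m * ‖Complex.Gamma s‖ ≤ ‖Complex.Gamma (s + m)‖ := by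
  induction m with
  | zero => simp
  | succ m ih =>
    by_cases hsm : s + m = 0
    · have him : s.im = 0 := by simpa using congrArg Complex.im hsm
      simp [him]
    · rw [Nat.cast_succ, ← add_assoc, Complex.Gamma_add_one _ hsm, norm_mul, pow_succ']
      have : |s.im| ≤ ‖s + m‖ := by simpa using Complex.abs_im_le_norm (s + m)
      rw [mul_assoc]
      gcongr

lemma Complex.norm_Gamma_ofReal_add_abs_mul_I (c t : ℝ) :
    ‖Complex.Gamma (c + |t| * Complex.I)‖ = ‖Complex.Gamma (c + t * Complex.I)‖ := by
  rcases abs_choice t with h | h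
  · rw [h]
  · rw [h, ← Complex.norm_conj, ← Complex.Gamma_conj]
    congr 2
    apply Complex.ext <;> simp

theorem gamma_stirling_bound_on_strip_general (a b : ℝ) :
    ∃ C > (0:ℝ), ∃ T > (0:ℝ), ∀ c : ℝ, a ≤ c → c ≤ b → ∀ t : ℝ, T ≤ |t| →
      ‖Complex.Gamma (c + t * Complex.I)‖
        ≤ C * |t| ^ (c - 1 / 2) * Real.exp (-(Real.pi * |t|) / 2) := by
  obtain ⟨m, hm⟩ : ∃ m : ℕ, 1 ≤ a + m := ⟨⌈1 - a⌉₊, by linarith [Nat.le_ceil (1 - a)]⟩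
  obtain ⟨C, hC, hbound⟩ := exists_norm_Gamma_le_rpow_of_one_le (b + m)
  refine ⟨C, hC, 1, one_pos, fun c hac hcb t ht => ?_⟩
  have hpos : 0 < |t| := one_pos.trans_le ht
  have hshift := Complex.abs_im_pow_mul_norm_Gamma_le (c + |t| * Complex.I) m
  have hshifted := hbound (c + m) (by linarith) (by linarith) |t| ht
  have hsplit : |t| ^ (c + m - 1 / 2) = |t| ^ m * |t| ^ (c - 1 / 2) := by
    rw [← Real.rpow_natCast, ← Real.rpow_add hpos]
    ring_nf
  have him : ((c : ℂ) + |t| * Complex.I).im = |t| := by simp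
  rw [him, abs_abs] at hshift
  push_cast at hshifted
  rw [show (c : ℂ) + m + |t| * Complex.I = c + |t| * Complex.I + m by ring, hsplit] at hshifted
  rw [← Complex.norm_Gamma_ofReal_add_abs_mul_I]
  refine le_of_mul_le_mul_left ?_ (pow_pos hpos m)
  linarith

/-- Stirling bound for the Gamma function on vertical strips. -/
theorem gamma_stirling_bound_on_strip (a b : ℝ) (hab : a ≤ b) :
    ∃ C > (0:ℝ), ∃ T > (0:ℝ), ∀ c : ℝ, a ≤ c → c ≤ b → ∀ t : ℝ, T ≤ |t| →
      ‖Complex.Gamma (c + t * Complex.I)‖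
        ≤ C * |t| ^ (c - 1 / 2) * Real.exp (-(Real.pi * |t|) / 2) :=
  gamma_stirling_bound_on_strip_general a b

end
end

section
/- Let n ≥ 1 and let p, q be non-negative integers with p + q ≥ 1. For c ∈ (0, n+1) and x > 0, the integral I_c(x) := (1/2π) ∫_ℝ Γ(c+it)^p · Γ(1+n−c−it)^q · x^{−(c+it)} dt is absolutely convergent, and its value is independent of c: for all c_1, c_2 ∈ (0, n+1) and all x > 0, I_{c_1}(x) = I_{c_2}(x). -/
open MeasureTheory Filter Set

noncomputable section

/-!
On a closed vertical strip inside `0 < Re s < n + 1`, the recursion `Γ(s + 2) = (s + 1) s Γ(s)`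
together with `‖Γ(s + 2)‖ ≤ Γ(Re s + 2)` makes each Gamma factor `O(1 / (1 + t²))`, uniformly in
`Re s`. As `p + q ≥ 1`, the integrand is then integrable on every vertical line of the strip and
uniformly small on horizontal segments far from the real axis. It is holomorphic on the strip, so
Cauchy's theorem on rectangles of growing height moves the line of integration.
-/

open Complex Topology
open scoped Interval

namespace Complex

theorem norm_Gamma_le_Gamma_re {s : ℂ} (hs : 0 < s.re) : ‖Gamma s‖ ≤ Real.Gamma s.re := by
  rw [Gamma_eq_integral hs, Real.Gamma_eq_integral hs, GammaIntegral]
  refine (norm_integral_le_integral_norm _).trans_eq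
    (setIntegral_congr_fun measurableSet_Ioi fun x hx => ?_)
  rw [norm_mul, norm_cpow_eq_rpow_re_of_pos hx]
  simp [norm_exp]

theorem norm_Gamma_mul_sq_le {s : ℂ} (hs : 0 < s.re) :
    ‖Gamma s‖ * ‖s‖ ^ 2 ≤ Real.Gamma (s.re + 2) := by
  have hs₀ : s ≠ 0 := by rintro rfl; simp at hs
  have hs₁ : s + 1 ≠ 0 := fun h => by
    have := congrArg re h
    simp only [add_re, one_re, zero_re] at this
    linarith
  have hrec : Gamma (s + 2) = (s + 1) * (s * Gamma s) := by
    rw [show s + 2 = s + 1 + 1 by ring, Gamma_add_one _ hs₁, Gamma_add_one _ hs₀]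
  have hle : ‖s‖ ≤ ‖s + 1‖ := by
    rw [← sq_le_sq₀ (norm_nonneg _) (norm_nonneg _), Complex.sq_norm, Complex.sq_norm, normSq_apply,
      normSq_apply]
    simp only [add_re, one_re, add_im, one_im, add_zero]
    nlinarith
  calc ‖Gamma s‖ * ‖s‖ ^ 2 = ‖s‖ * (‖s‖ * ‖Gamma s‖) := by ring
    _ ≤ ‖s + 1‖ * (‖s‖ * ‖Gamma s‖) := by gcongr
    _ = ‖Gamma (s + 2)‖ := by rw [hrec, norm_mul, norm_mul]
    _ ≤ Real.Gamma (s.re + 2) := by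
      simpa using norm_Gamma_le_Gamma_re (s := s + 2) (by simp only [add_re]; norm_num; linarith)

theorem exists_norm_Gamma_le_div_one_add_sq {a b : ℝ} (ha : 0 < a) :
    ∃ C, 0 ≤ C ∧ ∀ σ ∈ Icc a b, ∀ t : ℝ, ‖Gamma (σ + t * I)‖ ≤ C / (1 + t ^ 2) := by
  set A := max (Real.Gamma (a + 2)) (Real.Gamma (b + 2))
  set ε := min (a ^ 2) 1
  have hA : 0 ≤ A := le_max_of_le_left (Real.Gamma_pos_of_pos (by linarith)).le
  have hε : 0 < ε := by positivity
  refine ⟨A / ε, by positivity, fun σ hσ t => ?_⟩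
  set s : ℂ := σ + t * I
  have hσ₀ : 0 < σ := ha.trans_le hσ.1
  have hre : s.re = σ := by simp [s]
  have hΓ : Real.Gamma (σ + 2) ≤ A :=
    Real.convexOn_Gamma.le_max_of_mem_Icc (by simp only [mem_Ioi]; linarith)
      (by simp only [mem_Ioi]; linarith [hσ.2]) ⟨by linarith [hσ.1], by linarith [hσ.2]⟩
  have hnorm : ε * (1 + t ^ 2) ≤ ‖s‖ ^ 2 := by
    have hsq : ‖s‖ ^ 2 = σ ^ 2 + t ^ 2 := by
      rw [Complex.sq_norm, normSq_apply]; simp [s]; ring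
    have ha₂ : a ^ 2 ≤ σ ^ 2 := pow_le_pow_left₀ ha.le hσ.1 2
    have := min_le_left (a ^ 2) 1
    have := min_le_right (a ^ 2) 1
    rw [hsq]
    nlinarith [sq_nonneg t]
  rw [div_div, le_div_iff₀ (by positivity)]
  calc ‖Gamma s‖ * (ε * (1 + t ^ 2)) ≤ ‖Gamma s‖ * ‖s‖ ^ 2 := by gcongr
    _ ≤ Real.Gamma (s.re + 2) := norm_Gamma_mul_sq_le (hre ▸ hσ₀)
    _ ≤ A := hre ▸ hΓ

section ContourShift

variable {E : Type*} [NormedAddCommGroup E] [NormedSpace ℂ E] {f : ℂ → E} {c₁ c₂ : ℝ}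
  {g : ℝ → ℝ}

theorem norm_integral_vertical_sub_le (hf : DifferentiableOn ℂ f (re ⁻¹' [[c₁, c₂]]))
    (hbound : ∀ σ ∈ [[c₁, c₂]], ∀ t : ℝ, ‖f (σ + t * I)‖ ≤ g |t|) (T : ℝ) :
    ‖(∫ t in -T..T, f (c₁ + t * I)) - ∫ t in -T..T, f (c₂ + t * I)‖
      ≤ 2 * (g |T| * |c₂ - c₁|) := by
  have hrect := integral_boundary_rect_eq_zero_of_differentiableOn f ⟨c₁, -T⟩ ⟨c₂, T⟩
    (hf.mono fun s hs => hs.1)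
  dsimp only at hrect
  have hedge (t : ℝ) (ht : |t| = |T|) :
      ‖∫ σ in c₁..c₂, f (σ + t * I)‖ ≤ g |T| * |c₂ - c₁| :=
    intervalIntegral.norm_integral_le_of_norm_le_const fun σ hσ =>
      ht ▸ hbound σ (uIoc_subset_uIcc hσ) t
  have hsides : I • ((∫ t in -T..T, f (c₁ + t * I)) - ∫ t in -T..T, f (c₂ + t * I))
      = (∫ σ in c₁..c₂, f (σ + (-T : ℝ) * I)) - ∫ σ in c₁..c₂, f (σ + T * I) := by
    linear_combination (norm := module) -hrect
  calc _ = ‖I • ((∫ t in -T..T, f (c₁ + t * I)) - ∫ t in -T..T, f (c₂ + t * I))‖ := by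
        rw [norm_smul, norm_I, one_mul]
    _ ≤ ‖∫ σ in c₁..c₂, f (σ + (-T : ℝ) * I)‖ + ‖∫ σ in c₁..c₂, f (σ + T * I)‖ := by
        rw [hsides]; exact norm_sub_le _ _
    _ ≤ 2 * (g |T| * |c₂ - c₁|) := by
        linarith [hedge (-T) (abs_neg T), hedge T rfl]

theorem integral_vertical_eq_of_differentiableOn
    (hf : DifferentiableOn ℂ f (re ⁻¹' [[c₁, c₂]]))
    (hbound : ∀ σ ∈ [[c₁, c₂]], ∀ t : ℝ, ‖f (σ + t * I)‖ ≤ g |t|)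
    (hg : Tendsto g atTop (𝓝 0)) (h₁ : VerticalIntegrable f c₁) (h₂ : VerticalIntegrable f c₂) :
    ∫ t : ℝ, f (c₁ + t * I) = ∫ t : ℝ, f (c₂ + t * I) := by
  have hlim {c : ℝ} (hc : VerticalIntegrable f c volume) :
      Tendsto (fun T : ℝ => ∫ t in -T..T, f (c + t * I)) atTop (𝓝 (∫ t : ℝ, f (c + t * I))) :=
    intervalIntegral_tendsto_integral hc tendsto_neg_atTop_atBot tendsto_id
  have hsmall : Tendsto (fun T : ℝ => 2 * (g |T| * |c₂ - c₁|)) atTop (𝓝 0) := by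
    simpa using ((hg.comp tendsto_abs_atTop_atTop).mul_const |c₂ - c₁|).const_mul 2
  exact sub_eq_zero.mp <| tendsto_nhds_unique ((hlim h₁).sub (hlim h₂)) <|
    squeeze_zero_norm (norm_integral_vertical_sub_le hf hbound) hsmall

end ContourShift

end Complex

theorem norm_cpowP {x : ℝ} (hx : 0 < x) (w : ℂ) : ‖cpowP x w‖ = x ^ w.re := by
  rw [cpowP, norm_exp, Real.rpow_def_of_pos hx, mul_comm]
  simp

def interpolatingWeightIntegrand (a : ℝ) (p q : ℕ) (x : ℝ) (s : ℂ) : ℂ :=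
  Gamma s ^ p * Gamma (a - s) ^ q * cpowP x (-s)

section InterpolatingWeight

variable {a : ℝ} {p q : ℕ} {x : ℝ}

theorem differentiableOn_interpolatingWeightIntegrand :
    DifferentiableOn ℂ (interpolatingWeightIntegrand a p q x) (re ⁻¹' Ioo 0 a) := by
  have hΓ (z : ℂ) (hz : 0 < z.re) : DifferentiableAt ℂ Gamma z :=
    differentiableAt_Gamma z fun m h => by
      have := congrArg re h
      simp only [neg_re, natCast_re] at this
      linarith [(Nat.cast_nonneg m : (0 : ℝ) ≤ m)]
  rintro s ⟨h₀, h₁⟩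
  have hΓ' : DifferentiableAt ℂ (fun z => Gamma (a - z)) s :=
    (hΓ _ (by simpa using h₁)).comp s ((differentiableAt_const _).sub differentiableAt_id)
  exact ((((hΓ s h₀).pow p).mul (hΓ'.pow q)).mul
    (differentiableAt_id.neg.mul_const _).cexp).differentiableWithinAt

theorem exists_norm_interpolatingWeightIntegrand_le (hpq : p + q ≠ 0) (hx : 0 < x) {c₁ c₂ : ℝ}
    (h₁ : 0 < c₁) (h₂ : c₂ < a) :
    ∃ K, ∀ σ ∈ Icc c₁ c₂, ∀ t : ℝ,
      ‖interpolatingWeightIntegrand a p q x (σ + t * I)‖ ≤ K / (1 + t ^ 2) := by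
  obtain ⟨C₁, hC₁, hΓ₁⟩ := exists_norm_Gamma_le_div_one_add_sq (b := c₂) h₁
  obtain ⟨C₂, -, hΓ₂⟩ :=
    exists_norm_Gamma_le_div_one_add_sq (a := a - c₂) (b := a - c₁) (by linarith)
  set C := max C₁ C₂
  have hC : 0 ≤ C := le_max_of_le_left hC₁
  set X := max (x ^ (-c₂)) (x ^ (-c₁))
  refine ⟨C ^ (p + q) * X, fun σ hσ t => ?_⟩
  set u := (1 + t ^ 2)⁻¹ with hu
  have hu₀ : 0 ≤ u := by positivity
  have hu₁ : u ≤ 1 := inv_le_one_of_one_le₀ (by nlinarith [sq_nonneg t])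
  have hs : ‖Gamma (σ + t * I)‖ ≤ C * u :=
    (hΓ₁ σ hσ t).trans (by rw [div_eq_mul_inv, ← hu]; gcongr; exact le_max_left _ _)
  have has : ‖Gamma (a - (σ + t * I))‖ ≤ C * u := by
    have := hΓ₂ (a - σ) ⟨by linarith [hσ.2], by linarith [hσ.1]⟩ (-t)
    rw [show (a : ℂ) - (σ + t * I) = ((a - σ : ℝ) : ℂ) + ((-t : ℝ) : ℂ) * I by push_cast; ring]
    refine this.trans ?_
    rw [neg_sq, div_eq_mul_inv, ← hu]; gcongr; exact le_max_right _ _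
  have hxs : x ^ (-σ) ≤ X :=
    (convexOn_rpow_left hx).le_max_of_mem_Icc trivial trivial
      ⟨neg_le_neg hσ.2, neg_le_neg hσ.1⟩
  calc ‖interpolatingWeightIntegrand a p q x (σ + t * I)‖
      = ‖Gamma (σ + t * I)‖ ^ p * ‖Gamma (a - (σ + t * I))‖ ^ q * x ^ (-σ) := by
        rw [interpolatingWeightIntegrand, norm_mul, norm_mul, norm_pow, norm_pow, norm_cpowP hx]
        simp
    _ ≤ (C * u) ^ p * (C * u) ^ q * X := by gcongr
    _ = C ^ (p + q) * u ^ (p + q) * X := by ring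
    _ ≤ C ^ (p + q) * u * X := by gcongr; exact pow_le_of_le_one hu₀ hu₁ hpq
    _ = C ^ (p + q) * X / (1 + t ^ 2) := by ring

theorem verticalIntegrable_interpolatingWeightIntegrand (hpq : p + q ≠ 0) (hx : 0 < x) {c : ℝ}
    (hc : c ∈ Ioo 0 a) : VerticalIntegrable (interpolatingWeightIntegrand a p q x) c := by
  obtain ⟨K, hK⟩ := exists_norm_interpolatingWeightIntegrand_le hpq hx hc.1 hc.2
  have hcont : Continuous fun t : ℝ => interpolatingWeightIntegrand a p q x (c + t * I) :=
    differentiableOn_interpolatingWeightIntegrand.continuousOn.comp_continuous (by fun_prop)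
      fun t => by simpa using hc
  refine (integrable_inv_one_add_sq.const_mul K).mono' hcont.aestronglyMeasurable
    (.of_forall fun t => ?_)
  simpa [div_eq_mul_inv] using hK c ⟨le_rfl, le_rfl⟩ t

theorem integral_interpolatingWeightIntegrand_eq (hpq : p + q ≠ 0) (hx : 0 < x) {c₁ c₂ : ℝ}
    (hc₁ : c₁ ∈ Ioo 0 a) (hc₂ : c₂ ∈ Ioo 0 a) :
    ∫ t : ℝ, interpolatingWeightIntegrand a p q x (c₁ + t * I)
      = ∫ t : ℝ, interpolatingWeightIntegrand a p q x (c₂ + t * I) := by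
  have hmin : 0 < min c₁ c₂ := lt_min hc₁.1 hc₂.1
  have hmax : max c₁ c₂ < a := max_lt hc₁.2 hc₂.2
  obtain ⟨K, hK⟩ := exists_norm_interpolatingWeightIntegrand_le hpq hx hmin hmax
  refine integral_vertical_eq_of_differentiableOn (g := fun T => K / (1 + T ^ 2))
    (differentiableOn_interpolatingWeightIntegrand.mono fun s hs =>
      ⟨hmin.trans_le hs.1, hs.2.trans_lt hmax⟩)
    (fun σ hσ t => by simpa using hK σ hσ t) ?_
    (verticalIntegrable_interpolatingWeightIntegrand hpq hx hc₁)
    (verticalIntegrable_interpolatingWeightIntegrand hpq hx hc₂)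
  exact tendsto_const_nhds.div_atTop
    (tendsto_atTop_add_const_left _ 1 (tendsto_pow_atTop two_ne_zero))

end InterpolatingWeight

theorem interpolatingWeightIntegrand_natCast_add_one (n p q : ℕ) (x c t : ℝ) :
    interpolatingWeightIntegrand (n + 1) p q x (c + t * I)
      = Gamma (c + t * I) ^ p * Gamma (1 + n - c - t * I) ^ q * cpowP x (-(c + t * I)) := by
  rw [interpolatingWeightIntegrand]
  push_cast
  ring_nf

theorem interpolating_weight_integral_welldefined_general
    (n : ℕ) (p q : ℕ) (hpq : 1 ≤ p + q) :
    (∀ c ∈ Set.Ioo (0:ℝ) ((n:ℝ) + 1), ∀ x : ℝ, 0 < x →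
      Integrable (fun t : ℝ =>
        Complex.Gamma ((c : ℂ) + t * Complex.I) ^ p *
          Complex.Gamma (1 + (n : ℂ) - c - t * Complex.I) ^ q *
          cpowP x (-((c : ℂ) + t * Complex.I)))) ∧
    ∀ c₁ ∈ Set.Ioo (0:ℝ) ((n:ℝ) + 1), ∀ c₂ ∈ Set.Ioo (0:ℝ) ((n:ℝ) + 1), ∀ x : ℝ, 0 < x →
      (1 / (2 * (Real.pi : ℂ))) * (∫ t : ℝ,
          Complex.Gamma ((c₁ : ℂ) + t * Complex.I) ^ p *
            Complex.Gamma (1 + (n : ℂ) - c₁ - t * Complex.I) ^ q *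
            cpowP x (-((c₁ : ℂ) + t * Complex.I)))
        = (1 / (2 * (Real.pi : ℂ))) * ∫ t : ℝ,
            Complex.Gamma ((c₂ : ℂ) + t * Complex.I) ^ p *
              Complex.Gamma (1 + (n : ℂ) - c₂ - t * Complex.I) ^ q *
              cpowP x (-((c₂ : ℂ) + t * Complex.I)) := by
  have hpq' : p + q ≠ 0 := by omega
  simp only [← interpolatingWeightIntegrand_natCast_add_one]
  exact ⟨fun c hc x hx => verticalIntegrable_interpolatingWeightIntegrand hpq' hx hc,
    fun c₁ hc₁ c₂ hc₂ x hx =>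
      congrArg _ (integral_interpolatingWeightIntegrand_eq hpq' hx hc₁ hc₂)⟩

/-- the contour integral defining the interpolating weight is absolutely
convergent and independent of the choice of `c ∈ (0, n+1)`. -/
theorem interpolating_weight_integral_welldefined
    (n : ℕ) (hn : 1 ≤ n) (p q : ℕ) (hpq : 1 ≤ p + q) :
    (∀ c ∈ Set.Ioo (0:ℝ) ((n:ℝ) + 1), ∀ x : ℝ, 0 < x →
      Integrable (fun t : ℝ =>
        Complex.Gamma ((c : ℂ) + t * Complex.I) ^ p *
          Complex.Gamma (1 + (n : ℂ) - c - t * Complex.I) ^ q *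
          cpowP x (-((c : ℂ) + t * Complex.I)))) ∧
    ∀ c₁ ∈ Set.Ioo (0:ℝ) ((n:ℝ) + 1), ∀ c₂ ∈ Set.Ioo (0:ℝ) ((n:ℝ) + 1), ∀ x : ℝ, 0 < x →
      (1 / (2 * (Real.pi : ℂ))) * (∫ t : ℝ,
          Complex.Gamma ((c₁ : ℂ) + t * Complex.I) ^ p *
            Complex.Gamma (1 + (n : ℂ) - c₁ - t * Complex.I) ^ q *
            cpowP x (-((c₁ : ℂ) + t * Complex.I)))
        = (1 / (2 * (Real.pi : ℂ))) * ∫ t : ℝ,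
            Complex.Gamma ((c₂ : ℂ) + t * Complex.I) ^ p *
              Complex.Gamma (1 + (n : ℂ) - c₂ - t * Complex.I) ^ q *
              cpowP x (-((c₂ : ℂ) + t * Complex.I)) :=
  interpolating_weight_integral_welldefined_general n p q hpq

end
end

section
/- Let n ≥ 1, fix c ∈ (0, n+1), and for non-negative integers p, q with p + q ≥ 1 define w^{(p,q)}(x) := (1/2π) ∫_ℝ Γ(c+it)^p · Γ(1+n−c−it)^q · x^{−(c+it)} dt for x > 0 (an absolutely convergent integral). Then for all non-negative integers p_1, q_1, p_2, q_2 with p_1 + q_1 ≥ 1 and p_2 + q_2 ≥ 1 and all x > 0, the multiplicative convolution satisfies (w^{(p_1,q_1)} ⊛ w^{(p_2,q_2)})(x) = w^{(p_1+p_2, q_1+q_2)}(x). -/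
open MeasureTheory Filter Set

noncomputable section

/-- The interpolating weight `w^{(p,q)}(x)` for a fixed contour abscissa `c`. -/
def interpW (n : ℕ) (c : ℝ) (p q : ℕ) (x : ℝ) : ℂ :=
  (1 / (2 * (Real.pi : ℂ))) * ∫ t : ℝ,
    Complex.Gamma ((c : ℂ) + t * Complex.I) ^ p *
      Complex.Gamma (1 + (n : ℂ) - c - t * Complex.I) ^ q *
      cpowP x (-((c : ℂ) + t * Complex.I))

/-! In the coordinate `x = exp L`, `interpW n c p q` is `exp (-c L)` times the Fourier transform of
`y ↦ Γ(c + 2πiy)^p Γ(n + 1 - c - 2πiy)^q`, i.e. an inverse Mellin transform on the line `Re s = c`,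
and the multiplicative convolution becomes an additive convolution. The Fourier transform turns the
product of symbols into the convolution of their transforms, provided the symbols are continuous,
integrable and have integrable Fourier transforms. This class is closed under products, and it
contains `y ↦ Γ(σ + 2πiy)` for `σ > 0`: that function is the Fourier transform of the integrable
kernel `u ↦ exp (-σu - exp (-u))`, and it is integrable because `Γ(z + 2) = z (z + 1) Γ(z)` makes it
decay like `1 / y²`. -/

open Complex
open scoped Real FourierTransform

theorem MeasureTheory.Integrable.continuous_fourier {E : Type*} [NormedAddCommGroup E]
    [NormedSpace ℂ E] {f : ℝ → E} (hf : Integrable f) : Continuous (𝓕 f) :=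
  VectorFourier.fourierIntegral_continuous Real.continuous_fourierChar (innerSL ℝ).continuous₂ hf

structure FourierInvertible (G : ℝ → ℂ) : Prop where
  continuous : Continuous G
  integrable : Integrable G
  integrable_fourier : Integrable (𝓕 G)

namespace FourierInvertible

variable {G : ℝ → ℂ}

theorem fourierInv_fourier (hG : FourierInvertible G) : 𝓕⁻ (𝓕 G) = G :=
  hG.continuous.fourierInv_fourier_eq hG.integrable hG.integrable_fourier

theorem eq_integral_fourier (hG : FourierInvertible G) (τ : ℝ) :
    G τ = ∫ u, 𝐞 (u * τ) • 𝓕 G u := by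
  conv_lhs => rw [← hG.fourierInv_fourier, Real.fourierInv_eq]
  simp [mul_comm]

theorem norm_le_integral_norm_fourier (hG : FourierInvertible G) (τ : ℝ) :
    ‖G τ‖ ≤ ∫ u, ‖𝓕 G u‖ := by
  rw [hG.eq_integral_fourier]
  refine (norm_integral_le_integral_norm _).trans_eq ?_
  simp

end FourierInvertible

theorem Real.fourier_mul_eq_integral {G₁ G₂ : ℝ → ℂ} (h₁ : Integrable G₁)
    (h₂ : FourierInvertible G₂) (v : ℝ) :
    𝓕 (fun τ ↦ G₁ τ * G₂ τ) v = ∫ u, 𝓕 G₁ (v - u) * 𝓕 G₂ u := by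
  have hprod : Integrable (Function.uncurry fun u τ : ℝ ↦
      𝐞 (-(τ * (v - u))) • (G₁ τ * 𝓕 G₂ u)) (volume.prod volume) := by
    refine (h₂.integrable_fourier.norm.mul_prod h₁.norm).mono' ?_ (ae_of_all _ fun ⟨u, τ⟩ ↦ ?_)
    · exact (Real.continuous_fourierChar.comp (by fun_prop)).aestronglyMeasurable.smul
        (h₁.aestronglyMeasurable.comp_snd.mul h₂.integrable_fourier.aestronglyMeasurable.comp_fst)
    · simp [mul_comm]
  calc 𝓕 (fun τ ↦ G₁ τ * G₂ τ) v
      = ∫ τ, ∫ u, 𝐞 (-(τ * (v - u))) • (G₁ τ * 𝓕 G₂ u) := by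
        rw [Real.fourier_real_eq]
        congr 1 with τ
        rw [h₂.eq_integral_fourier τ]
        simp only [Circle.smul_def, smul_eq_mul]
        rw [← integral_const_mul, ← integral_const_mul]
        congr 1 with u
        rw [show -(τ * (v - u)) = -(τ * v) + u * τ by ring, AddChar.map_add_eq_mul, Circle.coe_mul]
        ring
    _ = ∫ u, ∫ τ, 𝐞 (-(τ * (v - u))) • (G₁ τ * 𝓕 G₂ u) := (integral_integral_swap hprod).symm
    _ = ∫ u, 𝓕 G₁ (v - u) * 𝓕 G₂ u := by
        congr 1 with u
        rw [Real.fourier_real_eq G₁, ← integral_mul_const]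
        simp only [smul_mul_assoc]

namespace FourierInvertible

variable {G G₁ G₂ : ℝ → ℂ}

theorem mul (h₁ : FourierInvertible G₁) (h₂ : FourierInvertible G₂) :
    FourierInvertible (fun τ ↦ G₁ τ * G₂ τ) where
  continuous := h₁.continuous.mul h₂.continuous
  integrable := h₁.integrable.mul_bdd h₂.continuous.aestronglyMeasurable
    (ae_of_all _ h₂.norm_le_integral_norm_fourier)
  integrable_fourier := by
    have hconv := h₂.integrable_fourier.integrable_convolution (ContinuousLinearMap.mul ℂ ℂ)
      h₁.integrable_fourier
    refine hconv.congr (ae_of_all _ fun v ↦ ?_)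
    simp only [convolution_def, ContinuousLinearMap.mul_apply', mul_comm (𝓕 G₂ _),
      Real.fourier_mul_eq_integral h₁.integrable h₂]

theorem pow (hG : FourierInvertible G) {k : ℕ} (hk : 1 ≤ k) :
    FourierInvertible (fun τ ↦ G τ ^ k) := by
  induction k, hk using Nat.le_induction with
  | base => simpa using hG
  | succ k _ ih => simpa only [pow_succ] using ih.mul hG

theorem comp_neg (hG : FourierInvertible G) : FourierInvertible (fun τ ↦ G (-τ)) where
  continuous := hG.continuous.comp continuous_neg
  integrable := hG.integrable.comp_neg
  integrable_fourier := by
    rw [← Real.fourierInv_eq_fourier_comp_neg, funext (Real.fourierInv_eq_fourier_neg G)]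
    exact hG.integrable_fourier.comp_neg

theorem fourier (hG : FourierInvertible G) : FourierInvertible (𝓕 G) where
  continuous := hG.integrable.continuous_fourier
  integrable := hG.integrable_fourier
  integrable_fourier := by
    have h : 𝓕 (𝓕 G) = fun w ↦ G (-w) := by
      ext w
      rw [← neg_neg w, ← Real.fourierInv_eq_fourier_neg, hG.fourierInv_fourier, neg_neg]
    rw [h]
    exact hG.integrable.comp_neg

end FourierInvertible

section ExpSubstitution

variable {E : Type*} [NormedAddCommGroup E] [NormedSpace ℝ E]

theorem integral_Ioi_zero_eq_integral_exp_smul (f : ℝ → E) :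
    ∫ x in Ioi 0, f x = ∫ u, Real.exp u • f (Real.exp u) := by
  rw [← Real.range_exp, ← image_univ, integral_image_eq_integral_abs_deriv_smul MeasurableSet.univ
    (fun u _ ↦ (Real.hasDerivAt_exp u).hasDerivWithinAt) Real.exp_injective.injOn,
    Measure.restrict_univ]
  simp_rw [abs_of_pos (Real.exp_pos _)]

theorem integrableOn_Ioi_zero_iff_integrable_exp_smul (f : ℝ → E) :
    IntegrableOn f (Ioi 0) ↔ Integrable fun u ↦ Real.exp u • f (Real.exp u) := by
  rw [← Real.range_exp, ← image_univ, integrableOn_image_iff_integrableOn_abs_deriv_smul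
    MeasurableSet.univ (fun u _ ↦ (Real.hasDerivAt_exp u).hasDerivWithinAt)
    Real.exp_injective.injOn, integrableOn_univ]
  simp_rw [abs_of_pos (Real.exp_pos _)]

end ExpSubstitution

theorem mconvC_congr {f₁ f₂ g₁ g₂ : ℝ → ℂ} (hf : EqOn f₁ f₂ (Ioi 0)) (hg : EqOn g₁ g₂ (Ioi 0))
    {x : ℝ} (hx : 0 < x) : mconvC f₁ g₁ x = mconvC f₂ g₂ x :=
  setIntegral_congr_fun measurableSet_Ioi fun y hy ↦ by
    rw [hf (div_pos hx (mem_Ioi.1 hy)), hg hy]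

theorem mconvC_exp (f g : ℝ → ℂ) (L : ℝ) :
    mconvC f g (Real.exp L) = ∫ v, f (Real.exp (L - v)) * g (Real.exp v) := by
  rw [mconvC, integral_Ioi_zero_eq_integral_exp_smul]
  congr 1 with v
  rw [Real.exp_sub, Complex.real_smul, mul_div_cancel₀ _ (by exact_mod_cast (Real.exp_pos v).ne')]

theorem mellinInv_exp (σ : ℝ) (F : ℂ → ℂ) (w : ℝ) :
    mellinInv σ F (Real.exp w) = Real.exp (-σ * w) • 𝓕 (fun y : ℝ ↦ F (σ + 2 * π * y * I)) w := by
  rw [mellinInv_eq_fourierInv σ F (Real.exp_pos w), Real.log_exp, Real.fourierInv_eq_fourier_neg,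
    neg_neg, ← ofReal_neg, ← ofReal_cpow (Real.exp_pos w).le, ← Real.exp_mul, mul_comm,
    Complex.real_smul, smul_eq_mul]

theorem mconvC_mellinInv {σ : ℝ} {F₁ F₂ : ℂ → ℂ}
    (h₁ : Integrable fun y : ℝ ↦ F₁ (σ + 2 * π * y * I))
    (h₂ : FourierInvertible fun y : ℝ ↦ F₂ (σ + 2 * π * y * I)) {x : ℝ} (hx : 0 < x) :
    mconvC (mellinInv σ F₁) (mellinInv σ F₂) x = mellinInv σ (fun s ↦ F₁ s * F₂ s) x := by
  rw [← Real.exp_log hx, mconvC_exp, mellinInv_exp, Real.fourier_mul_eq_integral h₁ h₂,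
    ← integral_smul]
  congr 1 with v
  simp only [mellinInv_exp, Complex.real_smul]
  rw [show -σ * Real.log x = -σ * (Real.log x - v) + -σ * v by ring, Real.exp_add]
  push_cast
  ring

namespace Complex

theorem norm_Gamma_le_Gamma_re_s16 {z : ℂ} (hz : 0 < z.re) : ‖Gamma z‖ ≤ Real.Gamma z.re := by
  rw [Gamma_eq_integral hz, GammaIntegral, Real.Gamma_eq_integral hz]
  refine (norm_integral_le_integral_norm _).trans_eq
    (setIntegral_congr_fun measurableSet_Ioi fun x hx ↦ ?_)
  rw [norm_mul, norm_real, Real.norm_eq_abs, norm_cpow_eq_rpow_re_of_pos hx, sub_re, one_re,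
    abs_of_pos (Real.exp_pos _)]

theorem norm_Gamma_mul_one_add_sq_im_le {z : ℂ} (hz : 0 < z.re) :
    ‖Gamma z‖ * (1 + z.im ^ 2) ≤ Real.Gamma z.re + Real.Gamma (z.re + 2) := by
  have h0 : z ≠ 0 := fun h ↦ by simp [h] at hz
  have h1 : z + 1 ≠ 0 := fun h ↦ by
    have := congrArg re h
    simp only [add_re, one_re, zero_re] at this
    linarith
  have hrec : Gamma (z + 2) = (z + 1) * z * Gamma z := by
    rw [show z + 2 = z + 1 + 1 by ring, Gamma_add_one _ h1, Gamma_add_one _ h0]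
    ring
  have him : z.im ^ 2 ≤ ‖z + 1‖ * ‖z‖ := by
    have h := mul_le_mul (abs_im_le_norm (z + 1)) (abs_im_le_norm z) (abs_nonneg _)
      (norm_nonneg _)
    simpa [← sq] using h
  have hshift : ‖z + 1‖ * ‖z‖ * ‖Gamma z‖ ≤ Real.Gamma (z.re + 2) := by
    simpa [hrec] using norm_Gamma_le_Gamma_re_s16 (z := z + 2) (by simp; linarith)
  nlinarith [norm_Gamma_le_Gamma_re_s16 hz, norm_nonneg (Gamma z)]

theorem Gamma_eq_fourier {σ : ℝ} (hσ : 0 < σ) (y : ℝ) :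
    Gamma (σ + 2 * π * y * I) =
      𝓕 (fun u : ℝ ↦ ((Real.exp (-σ * u - Real.exp (-u)) : ℝ) : ℂ)) y := by
  have hre : (σ + 2 * π * y * I : ℂ).re = σ := by simp
  have him : (σ + 2 * π * y * I : ℂ).im / (2 * π) = y := by simp [field]
  rw [Gamma_eq_integral (by rw [hre]; exact hσ), GammaIntegral_eq_mellin, mellin_eq_fourier, hre,
    him]
  refine congrArg (fun f : ℝ → ℂ ↦ 𝓕 f y) (funext fun u ↦ ?_)
  rw [Complex.real_smul, ← ofReal_mul, ← Real.exp_add]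
  ring_nf

end Complex

theorem integrable_exp_neg_mul_sub_exp_neg {σ : ℝ} (hσ : 0 < σ) :
    Integrable fun u : ℝ ↦ Real.exp (-σ * u - Real.exp (-u)) := by
  have h := (integrableOn_Ioi_zero_iff_integrable_exp_smul _).1 (Real.GammaIntegral_convergent hσ)
  refine h.comp_neg.congr (ae_of_all _ fun u ↦ ?_)
  simp only [smul_eq_mul, Real.rpow_def_of_pos (Real.exp_pos _), Real.log_exp, ← Real.exp_add]
  ring_nf

theorem fourierInvertible_exp_neg_mul_sub_exp_neg {σ : ℝ} (hσ : 0 < σ) :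
    FourierInvertible fun u : ℝ ↦ ((Real.exp (-σ * u - Real.exp (-u)) : ℝ) : ℂ) where
  continuous := by fun_prop
  integrable := (integrable_exp_neg_mul_sub_exp_neg hσ).ofReal
  integrable_fourier := by
    have h2π : 2 * π ≠ 0 := by positivity
    refine ((integrable_inv_one_add_sq.comp_mul_left' h2π).const_mul
      (Real.Gamma σ + Real.Gamma (σ + 2))).mono'
      (integrable_exp_neg_mul_sub_exp_neg hσ).ofReal.continuous_fourier.aestronglyMeasurable
      (ae_of_all _ fun y ↦ ?_)
    have hre : (σ + 2 * π * y * I : ℂ).re = σ := by simp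
    have him : (σ + 2 * π * y * I : ℂ).im = 2 * π * y := by simp
    have h := Complex.norm_Gamma_mul_one_add_sq_im_le (z := σ + 2 * π * y * I) (by rwa [hre])
    rw [hre, him] at h
    rwa [← Complex.Gamma_eq_fourier hσ, ← div_eq_mul_inv, le_div_iff₀ (by positivity)]

theorem fourierInvertible_Gamma_vertical {σ : ℝ} (hσ : 0 < σ) :
    FourierInvertible fun y : ℝ ↦ Gamma (σ + 2 * π * y * I) := by
  rw [funext (Complex.Gamma_eq_fourier hσ)]
  exact (fourierInvertible_exp_neg_mul_sub_exp_neg hσ).fourier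

theorem fourierInvertible_Gamma_pow_mul_Gamma_pow {σ β : ℝ} (hσ : 0 < σ) (hσβ : σ < β)
    {p q : ℕ} (hpq : 1 ≤ p + q) :
    FourierInvertible fun y : ℝ ↦
      Gamma (σ + 2 * π * y * I) ^ p * Gamma (β - (σ + 2 * π * y * I)) ^ q := by
  have hleft := fourierInvertible_Gamma_vertical hσ
  have hright : FourierInvertible fun y : ℝ ↦ Gamma (β - (σ + 2 * π * y * I)) := by
    convert (fourierInvertible_Gamma_vertical (sub_pos.2 hσβ)).comp_neg using 3
    push_cast
    ring
  rcases Nat.eq_zero_or_pos p with rfl | hp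
  · simpa using hright.pow (k := q) (by omega)
  rcases Nat.eq_zero_or_pos q with rfl | hq
  · simpa using hleft.pow hp
  exact (hleft.pow hp).mul (hright.pow hq)

theorem interpW_eqOn_mellinInv (n : ℕ) (c : ℝ) (p q : ℕ) :
    EqOn (interpW n c p q)
      (mellinInv c fun s ↦ Gamma s ^ p * Gamma ((n + 1 : ℝ) - s) ^ q) (Ioi 0) := by
  intro x hx
  have hcpow : ∀ w : ℂ, cpowP x w = (x : ℂ) ^ w := fun w ↦ by
    rw [cpowP, cpow_def_of_ne_zero (ofReal_ne_zero.2 hx.ne'), ← ofReal_log hx.le,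
      mul_comm]
  simp only [interpW, mellinInv, hcpow, smul_eq_mul, Complex.real_smul]
  push_cast
  congr 1
  refine integral_congr_ae (ae_of_all _ fun t ↦ ?_)
  ring_nf

theorem interpW_mconv_general
    (n : ℕ) (c : ℝ) (hc : c ∈ Set.Ioo (0:ℝ) ((n:ℝ) + 1))
    (p₁ q₁ p₂ q₂ : ℕ) (h₁ : 1 ≤ p₁ + q₁) (h₂ : 1 ≤ p₂ + q₂) (x : ℝ) (hx : 0 < x) :
    mconvC (interpW n c p₁ q₁) (interpW n c p₂ q₂) x
      = interpW n c (p₁ + p₂) (q₁ + q₂) x := by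
  rw [mconvC_congr (interpW_eqOn_mellinInv n c p₁ q₁) (interpW_eqOn_mellinInv n c p₂ q₂) hx,
    mconvC_mellinInv (fourierInvertible_Gamma_pow_mul_Gamma_pow hc.1 hc.2 h₁).integrable
      (fourierInvertible_Gamma_pow_mul_Gamma_pow hc.1 hc.2 h₂) hx,
    interpW_eqOn_mellinInv n c _ _ hx]
  simp only [pow_add]
  congr with s
  ring

/-- the interpolating weights form a semigroup under multiplicative
convolution: `w^{(p₁,q₁)} ⊛ w^{(p₂,q₂)} = w^{(p₁+p₂,q₁+q₂)}`. -/
theorem interpW_mconv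
    (n : ℕ) (hn : 1 ≤ n) (c : ℝ) (hc : c ∈ Set.Ioo (0:ℝ) ((n:ℝ) + 1))
    (p₁ q₁ p₂ q₂ : ℕ) (h₁ : 1 ≤ p₁ + q₁) (h₂ : 1 ≤ p₂ + q₂) (x : ℝ) (hx : 0 < x) :
    mconvC (interpW n c p₁ q₁) (interpW n c p₂ q₂) x
      = interpW n c (p₁ + p₂) (q₁ + q₂) x :=
  interpW_mconv_general n c hc p₁ q₁ p₂ q₂ h₁ h₂ x hx
end
end

section
/- (Transformation of a bi-orthogonal system under multiplicative convolution) Let n ≥ 1. Let q_0,…,q_{n−1} : (0,∞) → ℝ be measurable with ∫_0^∞ x^j |q_k(x)| dx < ∞ for all j, k = 0,…,n−1, let (a_{jk})_{0 ≤ j ≤ k ≤ n−1} be real coefficients with a_{kk} = 1, set p_k(x) := Σ_{j=0}^k a_{jk} x^j, and assume the bi-orthonormality ∫_0^∞ p_k(x) q_l(x) dx = δ_{kl} for all k, l = 0,…,n−1. Let ω : (0,∞) → [0,∞) be measurable, not almost everywhere zero, with M ω(j+1) := ∫_0^∞ x^j ω(x) dx finite for j = 0,…,n−1. Define p̃_k(x)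 := Σ_{j=0}^k (M ω(k+1) · a_{jk} / M ω(j+1)) x^j and q̃_k(x) := (ω ⊛ q_k)(x) / M ω(k+1). Then ∫_0^∞ p̃_k(x) q̃_l(x) dx = δ_{kl} for all k, l = 0,…,n−1. -/
open MeasureTheory Filter Set

noncomputable section

/-- The moment `M ω(j+1) = ∫_0^∞ x^j ω(x) dx`. -/
def momInt (ω : ℝ → ℝ) (j : ℕ) : ℝ := ∫ x in Set.Ioi (0:ℝ), x ^ j * ω x

/-! By Fubini and the substitution `x = t y`, the `j`-th moment of `ω ⊛ g` is `Mω(j+1)` times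
the `j`-th moment of `g`. In `∫ p̃_k q̃_l` this factor cancels the denominator of the `j`-th
coefficient of `p̃_k`, leaving `Mω(k+1) / Mω(l+1) · ∫ p_k q_l = δ_kl`; the moments of `ω` are
positive because `ω ≥ 0` is not a.e. zero. -/

lemma integral_Ioi_pow_mul_comp_div (f : ℝ → ℝ) (j : ℕ) {c : ℝ} (hc : 0 < c) :
    ∫ x in Ioi (0:ℝ), x ^ j * f (x / c) = c ^ (j + 1) * momInt f j := by
  have hscale := integral_comp_mul_right_Ioi (fun t => (t * c) ^ j * f t) 0 (inv_pos.mpr hc)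
  simp only [inv_mul_cancel_right₀ hc.ne', zero_mul, inv_inv, smul_eq_mul] at hscale
  simp only [div_eq_mul_inv, hscale, mul_pow, mul_right_comm _ (c ^ j), integral_mul_const,
    momInt]
  ring

lemma integrableOn_Ioi_pow_mul_comp_div {f : ℝ → ℝ} {j : ℕ} {c : ℝ} (hc : 0 < c)
    (hf : IntegrableOn (fun x => x ^ j * f x) (Ioi 0)) :
    IntegrableOn (fun x => x ^ j * f (x / c)) (Ioi 0) := by
  have hscaled : IntegrableOn (fun t => (t * c) ^ j * f t) (Ioi (0 * c⁻¹)) := by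
    simp only [zero_mul, mul_pow, mul_right_comm _ (c ^ j)]
    exact hf.mul_const (c ^ j)
  simpa only [inv_mul_cancel_right₀ hc.ne', div_eq_mul_inv] using
    (integrableOn_Ioi_comp_mul_right_iff _ 0 (inv_pos.mpr hc)).mpr hscaled

lemma integrableOn_Ioi_pow_mul_of_pow_mul_abs {f : ℝ → ℝ} {j : ℕ} (hf : Measurable f)
    (h : IntegrableOn (fun x => x ^ j * |f x|) (Ioi 0)) :
    IntegrableOn (fun x => x ^ j * f x) (Ioi 0) := by
  refine h.mono' ((measurable_id.pow_const j).mul hf).aestronglyMeasurable ?_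
  filter_upwards [ae_restrict_mem measurableSet_Ioi] with x hx
  rw [Real.norm_eq_abs, abs_mul, abs_of_nonneg (pow_nonneg hx.le j)]

lemma momInt_pos {ω : ℝ → ℝ} {j : ℕ} (hω_nonneg : ∀ x ∈ Ioi (0:ℝ), 0 ≤ ω x)
    (hω_ne : ¬ (∀ᵐ x ∂(volume.restrict (Ioi (0:ℝ))), ω x = 0))
    (hω_int : IntegrableOn (fun x => x ^ j * ω x) (Ioi 0)) :
    0 < momInt ω j := by
  have hnonneg : 0 ≤ᵐ[volume.restrict (Ioi (0:ℝ))] fun x => x ^ j * ω x := by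
    filter_upwards [ae_restrict_mem measurableSet_Ioi] with x hx
    exact mul_nonneg (pow_nonneg hx.le j) (hω_nonneg x hx)
  have hsupport : Function.support (fun x => x ^ j * ω x) ∩ Ioi 0 = {x | ω x ≠ 0} ∩ Ioi 0 := by
    ext x
    constructor
    · rintro ⟨hx, hpos⟩
      exact ⟨right_ne_zero_of_mul hx, hpos⟩
    · rintro ⟨hx, hpos⟩
      exact ⟨mul_ne_zero (pow_ne_zero j (ne_of_gt hpos)) hx, hpos⟩
  rw [momInt, setIntegral_pos_iff_support_of_nonneg_ae hnonneg hω_int, hsupport, pos_iff_ne_zero,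
    ← Measure.restrict_apply' measurableSet_Ioi]
  simpa only [ae_iff, not_not] using hω_ne

section MellinMoments

variable {ω g : ℝ → ℝ} {j : ℕ}

lemma integrable_pow_mul_mconvR_kernel (hω : Measurable ω) (hg : Measurable g)
    (hω_int : IntegrableOn (fun x => x ^ j * |ω x|) (Ioi 0))
    (hg_int : IntegrableOn (fun y => y ^ j * |g y|) (Ioi 0)) :
    Integrable (fun p : ℝ × ℝ => p.2 ^ j * (ω (p.2 / p.1) * g p.1 / p.1))
      ((volume.restrict (Ioi 0)).prod (volume.restrict (Ioi 0))) := by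
  have hmeas : Measurable fun p : ℝ × ℝ => p.2 ^ j * (ω (p.2 / p.1) * g p.1 / p.1) := by
    fun_prop
  refine (integrable_prod_iff hmeas.aestronglyMeasurable).2 ⟨?_, ?_⟩
  · filter_upwards [ae_restrict_mem measurableSet_Ioi] with y hy
    have hslice := (integrableOn_Ioi_pow_mul_comp_div hy
      (integrableOn_Ioi_pow_mul_of_pow_mul_abs hω hω_int)).const_mul (g y / y)
    refine hslice.congr (ae_of_all _ fun x => ?_)
    ring
  · refine (hg_int.const_mul (momInt (fun x => |ω x|) j)).congr ?_
    filter_upwards [ae_restrict_mem measurableSet_Ioi] with y (hy : 0 < y)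
    have hnorm : ∀ x ∈ Ioi (0:ℝ), ‖x ^ j * (ω (x / y) * g y / y)‖ =
        x ^ j * |ω (x / y)| * (|g y| / y) := fun x (hx : 0 < x) => by
      rw [Real.norm_eq_abs, abs_mul, abs_div, abs_mul, abs_of_pos hy,
        abs_of_nonneg (pow_nonneg hx.le j)]
      ring
    rw [setIntegral_congr_fun measurableSet_Ioi hnorm, integral_mul_const,
      integral_Ioi_pow_mul_comp_div (fun x => |ω x|) j hy]
    field_simp
    ring

lemma integrableOn_pow_mul_mconvR (hω : Measurable ω) (hg : Measurable g)
    (hω_int : IntegrableOn (fun x => x ^ j * |ω x|) (Ioi 0))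
    (hg_int : IntegrableOn (fun y => y ^ j * |g y|) (Ioi 0)) :
    IntegrableOn (fun x => x ^ j * mconvR ω g x) (Ioi 0) := by
  have hmarginal := (integrable_pow_mul_mconvR_kernel hω hg hω_int hg_int).integral_prod_right
  simp only [integral_const_mul] at hmarginal
  exact hmarginal

lemma integral_pow_mul_mconvR (hω : Measurable ω) (hg : Measurable g)
    (hω_int : IntegrableOn (fun x => x ^ j * |ω x|) (Ioi 0))
    (hg_int : IntegrableOn (fun y => y ^ j * |g y|) (Ioi 0)) :
    ∫ x in Ioi (0:ℝ), x ^ j * mconvR ω g x = momInt ω j * ∫ y in Ioi (0:ℝ), y ^ j * g y := by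
  have hinner : ∀ y ∈ Ioi (0:ℝ), ∫ x in Ioi 0, x ^ j * (ω (x / y) * g y / y) =
      momInt ω j * (y ^ j * g y) := fun y (hy : 0 < y) => by
    have hfactor : ∀ x, x ^ j * (ω (x / y) * g y / y) = g y / y * (x ^ j * ω (x / y)) :=
      fun x => by ring
    simp only [hfactor, integral_const_mul, integral_Ioi_pow_mul_comp_div ω j hy]
    field_simp
    ring
  simp only [mconvR, ← integral_const_mul]
  rw [← integral_integral_swap (integrable_pow_mul_mconvR_kernel hω hg hω_int hg_int),
    setIntegral_congr_fun measurableSet_Ioi hinner, integral_const_mul]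

end MellinMoments

lemma integral_linearCombination_mul {α ι : Type*} [MeasurableSpace α] {μ : Measure α}
    (s : Finset ι) (c : ι → ℝ) (φ : ι → α → ℝ) (f : α → ℝ)
    (h : ∀ i ∈ s, Integrable (fun x => φ i x * f x) μ) :
    ∫ x, (∑ i ∈ s, c i * φ i x) * f x ∂μ = ∑ i ∈ s, c i * ∫ x, φ i x * f x ∂μ := by
  simp only [Finset.sum_mul, mul_assoc]
  rw [integral_finsetSum s fun i hi => (h i hi).const_mul (c i)]
  simp only [integral_const_mul]

theorem biorthogonal_system_transform_general
    (n : ℕ) (q : Fin n → ℝ → ℝ)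
    (hq_meas : ∀ k, Measurable (q k))
    (hq_int : ∀ j k : Fin n, IntegrableOn (fun x : ℝ => x ^ (j : ℕ) * |q k x|) (Set.Ioi 0))
    (a : Fin n → Fin n → ℝ)
    (ω : ℝ → ℝ) (hω_meas : Measurable ω) (hω_nonneg : ∀ x ∈ Set.Ioi (0:ℝ), 0 ≤ ω x)
    (hω_ne : ¬ (∀ᵐ x ∂(volume.restrict (Set.Ioi (0:ℝ))), ω x = 0))
    (hω_int : ∀ j : Fin n, IntegrableOn (fun x : ℝ => x ^ (j : ℕ) * ω x) (Set.Ioi 0))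
    (horth : ∀ k l : Fin n,
      (∫ x in Set.Ioi (0:ℝ), (∑ j ∈ Finset.Iic k, a j k * x ^ (j : ℕ)) * q l x)
        = if k = l then 1 else 0) :
    ∀ k l : Fin n,
      (∫ x in Set.Ioi (0:ℝ),
          (∑ j ∈ Finset.Iic k, momInt ω k * a j k / momInt ω j * x ^ (j : ℕ)) *
            (mconvR ω (q l) x / momInt ω l))
        = if k = l then 1 else 0 := by
  intro k l
  have hM : ∀ j : Fin n, momInt ω j ≠ 0 := fun j => (momInt_pos hω_nonneg hω_ne (hω_int j)).ne'
  have hω_abs : ∀ j : Fin n, IntegrableOn (fun x => x ^ (j : ℕ) * |ω x|) (Ioi 0) := fun j =>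
    (hω_int j).congr_fun (fun x (hx : 0 < x) => by rw [abs_of_nonneg (hω_nonneg x hx)])
      measurableSet_Ioi
  calc _ = (∫ x in Ioi 0, (∑ j ∈ Finset.Iic k, momInt ω k * a j k / momInt ω j * x ^ (j : ℕ)) *
          mconvR ω (q l) x) / momInt ω l := by
        simp only [← integral_div, mul_div_assoc]
    _ = (∑ j ∈ Finset.Iic k, momInt ω k * a j k / momInt ω j *
          (momInt ω j * ∫ x in Ioi 0, x ^ (j : ℕ) * q l x)) / momInt ω l := by
        rw [integral_linearCombination_mul (φ := fun (j : Fin n) x => x ^ (j : ℕ)) _ _ _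
          fun j _ => integrableOn_pow_mul_mconvR hω_meas (hq_meas l) (hω_abs j) (hq_int j l)]
        refine congrArg (· / _) (Finset.sum_congr rfl fun j _ => ?_)
        rw [integral_pow_mul_mconvR hω_meas (hq_meas l) (hω_abs j) (hq_int j l)]
    _ = momInt ω k *
          (∫ x in Ioi 0, (∑ j ∈ Finset.Iic k, a j k * x ^ (j : ℕ)) * q l x) / momInt ω l := by
        rw [integral_linearCombination_mul (φ := fun (j : Fin n) x => x ^ (j : ℕ)) _ _ _
          fun j _ => integrableOn_Ioi_pow_mul_of_pow_mul_abs (hq_meas l) (hq_int j l), Finset.mul_sum]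
        refine congrArg (· / _) (Finset.sum_congr rfl fun j _ => ?_)
        field_simp [hM j]
    _ = if k = l then 1 else 0 := by
        rw [horth]
        split_ifs with hkl
        · subst hkl
          field_simp [hM k]
        · simp

/-- transformation of a bi-orthogonal system under multiplicative
convolution with a weight `ω`. -/
theorem biorthogonal_system_transform
    (n : ℕ) (hn : 1 ≤ n) (q : Fin n → ℝ → ℝ)
    (hq_meas : ∀ k, Measurable (q k))
    (hq_int : ∀ j k : Fin n, IntegrableOn (fun x : ℝ => x ^ (j : ℕ) * |q k x|) (Set.Ioi 0))
    (a : Fin n → Fin n → ℝ) (ha : ∀ k, a k k = 1)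
    (ω : ℝ → ℝ) (hω_meas : Measurable ω) (hω_nonneg : ∀ x ∈ Set.Ioi (0:ℝ), 0 ≤ ω x)
    (hω_ne : ¬ (∀ᵐ x ∂(volume.restrict (Set.Ioi (0:ℝ))), ω x = 0))
    (hω_int : ∀ j : Fin n, IntegrableOn (fun x : ℝ => x ^ (j : ℕ) * ω x) (Set.Ioi 0))
    (horth : ∀ k l : Fin n,
      (∫ x in Set.Ioi (0:ℝ), (∑ j ∈ Finset.Iic k, a j k * x ^ (j : ℕ)) * q l x)
        = if k = l then 1 else 0) :
    ∀ k l : Fin n,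
      (∫ x in Set.Ioi (0:ℝ),
          (∑ j ∈ Finset.Iic k, momInt ω k * a j k / momInt ω j * x ^ (j : ℕ)) *
            (mconvR ω (q l) x / momInt ω l))
        = if k = l then 1 else 0 :=
  biorthogonal_system_transform_general n q hq_meas hq_int a ω hω_meas hω_nonneg hω_ne hω_int horth

end
end
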